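/- arXiv:1811.03931 — 2 statements merged into one kernel-verified Lean document; each statement's English description precedes it below -/
import Mathlib

section
/- Let λ₁, λ₂ > 0, T > 0, and let Π : ℕ × ℕ → ℝ be a bounded payoff function. Define the value function X(t, n₁, n₂) = Σ_{k₁=0}^∞ Σ_{k₂=0}^∞ Π(n₁+k₁, n₂+k₂) · P(k₁, λ₁(T−t)) · P(k₂, λ₂(T−t)) for t ∈ [0, T] and n₁, n₂ ∈ ℕ, where P(k, Λ) = e^{−Λ} Λ^k / k!. Then X(T, n₁, n₂) = Π(n₁, n₂), and for every t ∈ [0, T] the map t ↦ X(t, n₁, n₂) is differentiable with ∂_t X(t, n₁, n₂) = −λ₁ (X(t, n₁+1, n₂) − X(t, n₁, n₂)) − λ₂ (X(t, n₁, n₂+1) − X(t, n₁, n₂)). -/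
/-- The Poisson probability mass function `P(k, Λ) = e^{−Λ} Λ^k / k!`. -/
noncomputable def poissonP (Λ : ℝ) (k : ℕ) : ℝ :=
  Real.exp (-Λ) * Λ ^ k / (Nat.factorial k)

/-- The value of a European bet with payoff `pay` at time `t` with current scores
`(n₁, n₂)`, in the Poisson model with intensities `lam₁, lam₂` and terminal time `T`. -/
noncomputable def betValue (lam₁ lam₂ T : ℝ) (pay : ℕ × ℕ → ℝ)
    (t : ℝ) (n₁ n₂ : ℕ) : ℝ :=
  ∑' k₁ : ℕ, ∑' k₂ : ℕ,
    pay (n₁ + k₁, n₂ + k₂) * poissonP (lam₁ * (T - t)) k₁ * poissonP (lam₂ * (T - t)) k₂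

/-! With `τ = T - t`, the value is the expectation of `Π(n₁ + N¹, n₂ + N²)` for independent
Poisson variables of means `λ₁τ, λ₂τ`. Since `∂_Λ P(k, Λ) = P(k - 1, Λ) - P(k, Λ)`, termwise
differentiation of the double series (justified because near any `τ` the terms are dominated by a
bounded payoff times a product of summable Poisson-type majorants) followed by reindexing the
`P(k - 1, ·)` terms gives `∂_τ X = λ₁ δ₁X + λ₂ δ₂X`. At `τ = 0` all the mass sits at `k = 0`. -/

open Nat

/-- `P(k - 1, Λ)`, with `P(-1, Λ) = 0`. -/
noncomputable def poissonPPrev (Λ : ℝ) : ℕ → ℝ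
  | 0 => 0
  | k + 1 => poissonP Λ k

lemma poissonP_zero_left (k : ℕ) : poissonP 0 k = if k = 0 then 1 else 0 := by
  cases k <;> simp [poissonP]

lemma poissonP_nonneg {Λ : ℝ} (hΛ : 0 ≤ Λ) (k : ℕ) : 0 ≤ poissonP Λ k := by
  unfold poissonP; positivity

lemma poissonPPrev_nonneg {Λ : ℝ} (hΛ : 0 ≤ Λ) : ∀ k, 0 ≤ poissonPPrev Λ k
  | 0 => le_rfl
  | k + 1 => poissonP_nonneg hΛ k

lemma summable_poissonP (Λ : ℝ) : Summable (poissonP Λ) := by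
  refine ((Real.summable_pow_div_factorial Λ).mul_left (Real.exp (-Λ))).congr fun k => ?_
  rw [poissonP, mul_div_assoc]

lemma summable_poissonPPrev (Λ : ℝ) : Summable (poissonPPrev Λ) :=
  (summable_nat_add_iff 1).mp (summable_poissonP Λ)

lemma abs_poissonP_le {Λ M : ℝ} (h : |Λ| ≤ M) (k : ℕ) :
    |poissonP Λ k| ≤ Real.exp (2 * M) * poissonP M k := by
  have hexp : Real.exp (-Λ) ≤ Real.exp (2 * M) * Real.exp (-M) := by
    rw [← Real.exp_add]
    gcongr
    linarith [neg_abs_le Λ]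
  calc |poissonP Λ k| = Real.exp (-Λ) * |Λ| ^ k / k ! := by
        rw [poissonP, abs_div, abs_mul, abs_pow, Real.abs_exp, Nat.abs_cast]
    _ ≤ Real.exp (2 * M) * Real.exp (-M) * M ^ k / k ! := by gcongr
    _ = Real.exp (2 * M) * poissonP M k := by rw [poissonP]; ring

lemma abs_poissonPPrev_le {Λ M : ℝ} (h : |Λ| ≤ M) :
    ∀ k, |poissonPPrev Λ k| ≤ Real.exp (2 * M) * poissonPPrev M k
  | 0 => by simp [poissonPPrev]
  | k + 1 => abs_poissonP_le h k

lemma hasDerivAt_poissonP (Λ : ℝ) (k : ℕ) :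
    HasDerivAt (fun x => poissonP x k) (poissonPPrev Λ k - poissonP Λ k) Λ := by
  have h := (((hasDerivAt_neg Λ).exp).mul (hasDerivAt_pow k Λ)).div_const (k ! : ℝ)
  refine h.congr_deriv ?_
  cases k with
  | zero => simp [poissonPPrev, poissonP]
  | succ k =>
    simp only [poissonPPrev, poissonP, factorial_succ]
    push_cast
    field_simp
    ring

lemma hasDerivAt_poissonP_mul (a τ : ℝ) (k : ℕ) :
    HasDerivAt (fun s => poissonP (a * s) k)
      (a * (poissonPPrev (a * τ) k - poissonP (a * τ) k)) τ := by
  have h := (hasDerivAt_poissonP (a * τ) k).comp τ ((hasDerivAt_id' τ).const_mul a)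
  rw [mul_one] at h
  rw [mul_comm]
  exact h

noncomputable def poissonMajorant (M : ℝ) (k : ℕ) : ℝ :=
  Real.exp (2 * M) * (poissonP M k + poissonPPrev M k)

lemma summable_poissonMajorant (M : ℝ) : Summable (poissonMajorant M) :=
  ((summable_poissonP M).add (summable_poissonPPrev M)).mul_left _

lemma poissonMajorant_nonneg {M : ℝ} (hM : 0 ≤ M) (k : ℕ) : 0 ≤ poissonMajorant M k :=
  mul_nonneg (Real.exp_pos _).le (add_nonneg (poissonP_nonneg hM k) (poissonPPrev_nonneg hM k))

lemma abs_poissonP_le_majorant {Λ M : ℝ} (h : |Λ| ≤ M) (k : ℕ) :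
    |poissonP Λ k| ≤ poissonMajorant M k := by
  have hM : 0 ≤ M := (abs_nonneg Λ).trans h
  calc |poissonP Λ k| ≤ Real.exp (2 * M) * poissonP M k := abs_poissonP_le h k
    _ ≤ poissonMajorant M k := by
      unfold poissonMajorant
      gcongr
      exact le_add_of_nonneg_right (poissonPPrev_nonneg hM k)

lemma abs_poissonPPrev_sub_le_majorant {Λ M : ℝ} (h : |Λ| ≤ M) (k : ℕ) :
    |poissonPPrev Λ k - poissonP Λ k| ≤ poissonMajorant M k :=
  calc |poissonPPrev Λ k - poissonP Λ k| ≤ |poissonPPrev Λ k| + |poissonP Λ k| := abs_sub _ _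
    _ ≤ Real.exp (2 * M) * poissonPPrev M k + Real.exp (2 * M) * poissonP M k :=
      add_le_add (abs_poissonPPrev_le h k) (abs_poissonP_le h k)
    _ = poissonMajorant M k := by unfold poissonMajorant; ring

lemma abs_deriv_poissonP_mul_poissonP_le {x C a b Λ₁ Λ₂ M : ℝ} (hx : |x| ≤ C)
    (h₁ : |Λ₁| ≤ M) (h₂ : |Λ₂| ≤ M) (k l : ℕ) :
    |x * (a * (poissonPPrev Λ₁ k - poissonP Λ₁ k)) * poissonP Λ₂ l
        + x * poissonP Λ₁ k * (b * (poissonPPrev Λ₂ l - poissonP Λ₂ l))|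
      ≤ C * (|a| + |b|) * (poissonMajorant M k * poissonMajorant M l) := by
  have hC : 0 ≤ C := (abs_nonneg x).trans hx
  have hM : 0 ≤ M := (abs_nonneg Λ₁).trans h₁
  have hk := poissonMajorant_nonneg hM k
  have hl := poissonMajorant_nonneg hM l
  calc _ ≤ |x| * |a| * |poissonPPrev Λ₁ k - poissonP Λ₁ k| * |poissonP Λ₂ l|
        + |x| * |poissonP Λ₁ k| * |b| * |poissonPPrev Λ₂ l - poissonP Λ₂ l| := by
        refine (abs_add_le _ _).trans_eq ?_
        simp only [abs_mul]
        ring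
    _ ≤ C * |a| * poissonMajorant M k * poissonMajorant M l
        + C * poissonMajorant M k * |b| * poissonMajorant M l := by
        gcongr
        exacts [abs_poissonPPrev_sub_le_majorant h₁ k, abs_poissonP_le_majorant h₂ l,
          abs_poissonP_le_majorant h₁ k, abs_poissonPPrev_sub_le_majorant h₂ l]
    _ = C * (|a| + |b|) * (poissonMajorant M k * poissonMajorant M l) := by ring

lemma summable_mul_mul_of_abs_le {c : ℕ × ℕ → ℝ} {C : ℝ} (hc : ∀ p, |c p| ≤ C) {f g : ℕ → ℝ}
    (hf : Summable f) (hg : Summable g) :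
    Summable fun p : ℕ × ℕ => c p * f p.1 * g p.2 := by
  refine ((hf.abs.mul_of_nonneg hg.abs (fun _ => abs_nonneg _) (fun _ => abs_nonneg _)).mul_left
    C).of_norm_bounded fun p => ?_
  rw [Real.norm_eq_abs, abs_mul, abs_mul, mul_assoc]
  exact mul_le_mul_of_nonneg_right (hc p) (by positivity)

lemma tsum_mul_poissonPPrev_fst (c : ℕ × ℕ → ℝ) (x : ℝ) (g : ℕ → ℝ) :
    ∑' p : ℕ × ℕ, c p * poissonPPrev x p.1 * g p.2 =
      ∑' p : ℕ × ℕ, c (p.1 + 1, p.2) * poissonP x p.1 * g p.2 := by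
  have hinj : Function.Injective fun p : ℕ × ℕ => (p.1 + 1, p.2) := fun p q h => by
    simpa [Prod.ext_iff] using h
  refine (hinj.tsum_eq ?_).symm
  rintro ⟨_ | k, l⟩ hp
  · simp [poissonPPrev] at hp
  · exact ⟨(k, l), rfl⟩

lemma tsum_mul_poissonPPrev_snd (c : ℕ × ℕ → ℝ) (f : ℕ → ℝ) (y : ℝ) :
    ∑' p : ℕ × ℕ, c p * f p.1 * poissonPPrev y p.2 =
      ∑' p : ℕ × ℕ, c (p.1, p.2 + 1) * f p.1 * poissonP y p.2 := by
  have hinj : Function.Injective fun p : ℕ × ℕ => (p.1, p.2 + 1) := fun p q h => by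
    simpa [Prod.ext_iff] using h
  refine (hinj.tsum_eq ?_).symm
  rintro ⟨k, _ | l⟩ hp
  · simp [poissonPPrev] at hp
  · exact ⟨(k, l), rfl⟩

/-- `E[c(N¹_τ, N²_τ)]` for independent Poisson processes `N¹, N²` of rates `a, b`. -/
noncomputable def poissonExpect (a b : ℝ) (c : ℕ × ℕ → ℝ) (τ : ℝ) : ℝ :=
  ∑' p : ℕ × ℕ, c p * poissonP (a * τ) p.1 * poissonP (b * τ) p.2

lemma poissonExpect_zero (a b : ℝ) (c : ℕ × ℕ → ℝ) : poissonExpect a b c 0 = c (0, 0) := by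
  simp only [poissonExpect, mul_zero, poissonP_zero_left]
  rw [tsum_eq_single (0, 0)]
  · simp
  · rintro ⟨_ | _, _ | _⟩ hp <;> simp_all

theorem hasDerivAt_poissonExpect (a b : ℝ) {c : ℕ × ℕ → ℝ} {C : ℝ} (hc : ∀ p, |c p| ≤ C)
    (τ : ℝ) :
    HasDerivAt (poissonExpect a b c)
      (a * (poissonExpect a b (fun p => c (p.1 + 1, p.2)) τ - poissonExpect a b c τ)
        + b * (poissonExpect a b (fun p => c (p.1, p.2 + 1)) τ - poissonExpect a b c τ)) τ := by
  set F' : ℕ × ℕ → ℝ → ℝ := fun p s =>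
    c p * (a * (poissonPPrev (a * s) p.1 - poissonP (a * s) p.1)) * poissonP (b * s) p.2
      + c p * poissonP (a * s) p.1 * (b * (poissonPPrev (b * s) p.2 - poissonP (b * s) p.2))
  have hterm : ∀ p s, HasDerivAt (fun s => c p * poissonP (a * s) p.1 * poissonP (b * s) p.2)
      (F' p s) s := fun p s =>
    ((hasDerivAt_poissonP_mul a s p.1).const_mul (c p)).mul (hasDerivAt_poissonP_mul b s p.2)
  set M := (|a| + |b|) * (|τ| + 1)
  have hM : 0 ≤ M := by positivity
  have hball : ∀ s ∈ Metric.ball τ 1, |a * s| ≤ M ∧ |b * s| ≤ M := by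
    intro s hs
    have hs : |s| ≤ |τ| + 1 := by
      rw [Metric.mem_ball, Real.dist_eq] at hs
      linarith [abs_sub_abs_le_abs_sub s τ]
    rw [abs_mul, abs_mul]
    constructor <;> refine mul_le_mul ?_ hs (abs_nonneg s) (by positivity) <;>
      linarith [abs_nonneg a, abs_nonneg b]
  have hdom : ∀ p, ∀ s ∈ Metric.ball τ 1,
      ‖F' p s‖ ≤ C * (|a| + |b|) * (poissonMajorant M p.1 * poissonMajorant M p.2) :=
    fun p s hs => abs_deriv_poissonP_mul_poissonP_le (hc p) (hball s hs).1 (hball s hs).2 p.1 p.2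
  have hP := summable_mul_mul_of_abs_le hc (summable_poissonP (a * τ)) (summable_poissonP (b * τ))
  have hPrev₁ := summable_mul_mul_of_abs_le hc (summable_poissonPPrev (a * τ))
    (summable_poissonP (b * τ))
  have hPrev₂ := summable_mul_mul_of_abs_le hc (summable_poissonP (a * τ))
    (summable_poissonPPrev (b * τ))
  have hmem := Metric.mem_ball_self (x := τ) one_pos
  refine (hasDerivAt_tsum_of_isPreconnected
    (((summable_poissonMajorant M).mul_of_nonneg (summable_poissonMajorant M)
      (poissonMajorant_nonneg hM) (poissonMajorant_nonneg hM)).mul_left _)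
    Metric.isOpen_ball (convex_ball τ 1).isPreconnected (fun p s _ => hterm p s) hdom hmem hP
    hmem).congr_deriv ?_
  -- the `P(k - 1, ·)` terms are the expectations of the shifted payoffs
  rw [poissonExpect, poissonExpect, poissonExpect, ← tsum_mul_poissonPPrev_fst,
    ← tsum_mul_poissonPPrev_snd, ← hPrev₁.tsum_sub hP, ← hPrev₂.tsum_sub hP, ← tsum_mul_left,
    ← tsum_mul_left, ← ((hPrev₁.sub hP).mul_left a).tsum_add
      ((hPrev₂.sub hP).mul_left b)]
  congr 1 with p
  ring

lemma betValue_eq_poissonExpect (lam₁ lam₂ T : ℝ) {pay : ℕ × ℕ → ℝ} {C : ℝ}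
    (hpay : ∀ p, |pay p| ≤ C) (t : ℝ) (n₁ n₂ : ℕ) :
    betValue lam₁ lam₂ T pay t n₁ n₂ =
      poissonExpect lam₁ lam₂ (fun p => pay (n₁ + p.1, n₂ + p.2)) (T - t) :=
  (summable_mul_mul_of_abs_le (fun p => hpay (n₁ + p.1, n₂ + p.2))
    (summable_poissonP (lam₁ * (T - t))) (summable_poissonP (lam₂ * (T - t)))).tsum_prod.symm

theorem betValue_kolmogorov_forward_general
    (lam₁ lam₂ T : ℝ)
    (pay : ℕ × ℕ → ℝ) (hpay : ∃ C : ℝ, ∀ p : ℕ × ℕ, |pay p| ≤ C)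
    (n₁ n₂ : ℕ) :
    betValue lam₁ lam₂ T pay T n₁ n₂ = pay (n₁, n₂) ∧
    ∀ t ∈ Set.Icc (0 : ℝ) T,
      HasDerivAt (fun s : ℝ => betValue lam₁ lam₂ T pay s n₁ n₂)
        (-lam₁ * (betValue lam₁ lam₂ T pay t (n₁ + 1) n₂ - betValue lam₁ lam₂ T pay t n₁ n₂)
          - lam₂ * (betValue lam₁ lam₂ T pay t n₁ (n₂ + 1) - betValue lam₁ lam₂ T pay t n₁ n₂))
        t := by
  obtain ⟨C, hC⟩ := hpay
  have hX := betValue_eq_poissonExpect lam₁ lam₂ T hC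
  refine ⟨by rw [hX, sub_self, poissonExpect_zero]; rfl, fun t _ => ?_⟩
  have h := (hasDerivAt_poissonExpect lam₁ lam₂ (fun p => hC (n₁ + p.1, n₂ + p.2)) (T - t)).comp t
    ((hasDerivAt_id' t).const_sub T)
  simp only [← add_assoc] at h
  simp only [hX, add_right_comm n₁ 1, add_right_comm n₂ 1]
  refine h.congr_deriv ?_
  ring

/-- Kolmogorov forward equation: the value of a European bet satisfies the terminal
condition `X(T, n₁, n₂) = Π(n₁, n₂)` and the PIDE
`∂ₜX = −λ₁ δ₁X − λ₂ δ₂X` on `[0, T]`. -/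
theorem betValue_kolmogorov_forward
    (lam₁ lam₂ T : ℝ) (hlam₁ : 0 < lam₁) (hlam₂ : 0 < lam₂) (hT : 0 < T)
    (pay : ℕ × ℕ → ℝ) (hpay : ∃ C : ℝ, ∀ p : ℕ × ℕ, |pay p| ≤ C)
    (n₁ n₂ : ℕ) :
    betValue lam₁ lam₂ T pay T n₁ n₂ = pay (n₁, n₂) ∧
    ∀ t ∈ Set.Icc (0 : ℝ) T,
      HasDerivAt (fun s : ℝ => betValue lam₁ lam₂ T pay s n₁ n₂)
        (-lam₁ * (betValue lam₁ lam₂ T pay t (n₁ + 1) n₂ - betValue lam₁ lam₂ T pay t n₁ n₂)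
          - lam₂ * (betValue lam₁ lam₂ T pay t n₁ (n₂ + 1) - betValue lam₁ lam₂ T pay t n₁ n₂))
        t :=
  betValue_kolmogorov_forward_general lam₁ lam₂ T pay hpay n₁ n₂
end

section
/- Let T > 0, t ∈ [0, T], λ₂ > 0, and let Π : ℕ × ℕ → ℝ be a bounded payoff function. Define X(λ₁, n₁, n₂) = Σ_{k₁=0}^∞ Σ_{k₂=0}^∞ Π(n₁+k₁, n₂+k₂) · P(k₁, λ₁(T−t)) · P(k₂, λ₂(T−t)), where P(k, Λ) = e^{−Λ} Λ^k / k!. Then for every λ₁ > 0 and n₁, n₂ ∈ ℕ, the map λ₁ ↦ X(λ₁, n₁, n₂) is differentiable with ∂X/∂λ₁ = (T−t) · (X(λ₁, n₁+1, n₂) − X(λ₁, n₁, n₂)); the analogous identity holds for differentiation in λ₂ with the forward difference in the second score argument. -/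
open scoped Nat

/-! With `P(k, Λ) = e^{-Λ} Λ^k / k!`, a Poisson average `∑ a_k P(k, Λ)` of bounded coefficients
equals `e^{-Λ} F(Λ)`, where `F(Λ) = ∑ a_k Λ^k / k!` is entire with derivative the generating
function of the shifted sequence `a_{k+1}`. The product rule then gives
`∂_Λ ∑ a_k P(k, Λ) = ∑ a_{k+1} P(k, Λ) - ∑ a_k P(k, Λ)`. Summing out the second score first
makes the bet value such an average in `Λ = λ₁ (T - t)`, and the chain rule contributes the
factor `T - t`. The identity for `λ₂` follows by exchanging the two teams, which leaves the value
unchanged because the double series converges absolutely. -/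

lemma poissonP_eq_exp_mul (Λ : ℝ) (k : ℕ) : poissonP Λ k = Real.exp (-Λ) * (Λ ^ k / k !) :=
  mul_div_assoc _ _ _

lemma summable_norm_poissonP (Λ : ℝ) : Summable fun k => ‖poissonP Λ k‖ := by
  simp_rw [Real.norm_eq_abs]
  rw [summable_abs_iff]
  exact ((Real.summable_pow_div_factorial Λ).mul_left _).congr fun k =>
    (poissonP_eq_exp_mul Λ k).symm

lemma hasDerivAt_pow_succ_div_factorial_succ (k : ℕ) (x : ℝ) :
    HasDerivAt (fun y : ℝ => y ^ (k + 1) / (k + 1)!) (x ^ k / k !) x := by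
  refine ((hasDerivAt_pow (k + 1) x).div_const ((k + 1)! : ℝ)).congr_deriv ?_
  rw [Nat.factorial_succ, Nat.cast_mul, Nat.add_sub_cancel, mul_div_mul_left]
  positivity

section BoundedCoefficients

variable {a : ℕ → ℝ} {C : ℝ}

lemma norm_mul_pow_div_factorial_le (ha : ∀ k, |a k| ≤ C) {x r : ℝ} (hx : |x| ≤ r) (k : ℕ) :
    ‖a k * (x ^ k / k !)‖ ≤ C * (r ^ k / k !) := by
  rw [norm_mul, norm_div, norm_pow, Real.norm_natCast, Real.norm_eq_abs, Real.norm_eq_abs]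
  gcongr
  · exact (abs_nonneg _).trans (ha 0)
  · exact ha k

lemma summable_mul_pow_div_factorial (ha : ∀ k, |a k| ≤ C) (x : ℝ) :
    Summable fun k => a k * (x ^ k / k !) :=
  .of_norm_bounded ((Real.summable_pow_div_factorial |x|).mul_left C)
    (norm_mul_pow_div_factorial_le ha le_rfl)

theorem hasDerivAt_tsum_mul_pow_div_factorial (ha : ∀ k, |a k| ≤ C) (x : ℝ) :
    HasDerivAt (fun y => ∑' k, a k * (y ^ k / k !)) (∑' k, a (k + 1) * (x ^ k / k !)) x := by
  have hsplit : (fun y => ∑' k, a k * (y ^ k / k !))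
      = fun y => a 0 + ∑' k, a (k + 1) * (y ^ (k + 1) / (k + 1)!) := by
    funext y
    rw [(summable_mul_pow_div_factorial ha y).tsum_eq_zero_add]
    simp
  rw [hsplit]
  refine .const_add _ (hasDerivAt_tsum_of_isPreconnected (t := Metric.ball 0 (|x| + 1)) (y₀ := 0)
    ((Real.summable_pow_div_factorial (|x| + 1)).mul_left C) Metric.isOpen_ball
    (convex_ball 0 _).isPreconnected
    (fun k y _ => (hasDerivAt_pow_succ_div_factorial_succ k y).const_mul _)
    (fun k y hy => norm_mul_pow_div_factorial_le (fun k => ha (k + 1)) ?_ k)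
    (Metric.mem_ball_self (by positivity)) (by simp) (by simp))
  rw [mem_ball_zero_iff, Real.norm_eq_abs] at hy
  exact hy.le

theorem hasDerivAt_tsum_mul_poissonP (ha : ∀ k, |a k| ≤ C) (Λ : ℝ) :
    HasDerivAt (fun Λ => ∑' k, a k * poissonP Λ k)
      (∑' k, a (k + 1) * poissonP Λ k - ∑' k, a k * poissonP Λ k) Λ := by
  have hfactor : ∀ (b : ℕ → ℝ) Λ,
      ∑' k, b k * poissonP Λ k = Real.exp (-Λ) * ∑' k, b k * (Λ ^ k / k !) := by
    intro b Λ
    rw [← tsum_mul_left]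
    congr 1 with k
    rw [poissonP_eq_exp_mul]
    ring
  simp_rw [hfactor]
  exact ((hasDerivAt_neg Λ).exp.mul (hasDerivAt_tsum_mul_pow_div_factorial ha Λ)).congr_deriv
    (by ring)

lemma abs_tsum_mul_poissonP_le (ha : ∀ k, |a k| ≤ C) (Λ : ℝ) :
    |∑' k, a k * poissonP Λ k| ≤ C * ∑' k, ‖poissonP Λ k‖ := by
  rw [← Real.norm_eq_abs, ← tsum_mul_left]
  exact tsum_of_norm_bounded ((summable_norm_poissonP Λ).mul_left C).hasSum fun k => by
    rw [norm_mul, Real.norm_eq_abs]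
    exact mul_le_mul_of_nonneg_right (ha k) (norm_nonneg _)

end BoundedCoefficients

section BetValue

variable {T t : ℝ} {pay : ℕ × ℕ → ℝ} {C : ℝ}

lemma betValue_eq_tsum_mul_poissonP (lam₁ lam₂ : ℝ) (n₁ n₂ : ℕ) :
    betValue lam₁ lam₂ T pay t n₁ n₂ = ∑' k₁,
      (∑' k₂, pay (n₁ + k₁, n₂ + k₂) * poissonP (lam₂ * (T - t)) k₂)
        * poissonP (lam₁ * (T - t)) k₁ := by
  unfold betValue
  congr 1 with k₁
  rw [← tsum_mul_right]
  congr 1 with k₂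
  ring

lemma betValue_swap (hpay : ∀ p, |pay p| ≤ C) (lam₁ lam₂ : ℝ) (n₁ n₂ : ℕ) :
    betValue lam₁ lam₂ T pay t n₁ n₂ = betValue lam₂ lam₁ T (pay ∘ Prod.swap) t n₂ n₁ := by
  have hsum : Summable (Function.uncurry fun k₁ k₂ =>
      pay (n₁ + k₁, n₂ + k₂) * poissonP (lam₁ * (T - t)) k₁ * poissonP (lam₂ * (T - t)) k₂) := by
    refine .of_norm_bounded (((summable_norm_poissonP (lam₁ * (T - t))).mul_norm
      (summable_norm_poissonP (lam₂ * (T - t)))).mul_left C) fun k => ?_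
    rw [Function.uncurry_apply_pair, mul_assoc, norm_mul _ (_ * _), Real.norm_eq_abs]
    exact mul_le_mul_of_nonneg_right (hpay _) (norm_nonneg _)
  unfold betValue
  rw [← hsum.tsum_comm]
  simp only [Function.comp_apply, Prod.swap_prod_mk, mul_right_comm]

lemma hasDerivAt_betValue_fst (hpay : ∀ p, |pay p| ≤ C) (lam₁ lam₂ : ℝ) (n₁ n₂ : ℕ) :
    HasDerivAt (fun l => betValue l lam₂ T pay t n₁ n₂)
      ((T - t) * (betValue lam₁ lam₂ T pay t (n₁ + 1) n₂ - betValue lam₁ lam₂ T pay t n₁ n₂))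
      lam₁ := by
  set a := fun k₁ => ∑' k₂, pay (n₁ + k₁, n₂ + k₂) * poissonP (lam₂ * (T - t)) k₂
  have ha (k : ℕ) : |a k| ≤ C * ∑' j, ‖poissonP (lam₂ * (T - t)) j‖ :=
    abs_tsum_mul_poissonP_le (fun _ => hpay _) _
  have hshift : betValue lam₁ lam₂ T pay t (n₁ + 1) n₂
      = ∑' k, a (k + 1) * poissonP (lam₁ * (T - t)) k := by
    simp only [betValue_eq_tsum_mul_poissonP, a, Nat.add_right_comm n₁ 1, ← add_assoc]
  have hfun : (fun l => betValue l lam₂ T pay t n₁ n₂)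
      = (fun Λ => ∑' k, a k * poissonP Λ k) ∘ fun l => l * (T - t) :=
    funext fun l => betValue_eq_tsum_mul_poissonP l lam₂ n₁ n₂
  rw [hfun, hshift, betValue_eq_tsum_mul_poissonP, mul_comm]
  exact (hasDerivAt_tsum_mul_poissonP ha (lam₁ * (T - t))).comp lam₁
    (hasDerivAt_mul_const (T - t))

lemma hasDerivAt_betValue_snd (hpay : ∀ p, |pay p| ≤ C) (lam₁ lam₂ : ℝ) (n₁ n₂ : ℕ) :
    HasDerivAt (fun l => betValue lam₁ l T pay t n₁ n₂)
      ((T - t) * (betValue lam₁ lam₂ T pay t n₁ (n₂ + 1) - betValue lam₁ lam₂ T pay t n₁ n₂))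
      lam₂ := by
  simp_rw [betValue_swap hpay lam₁]
  exact hasDerivAt_betValue_fst (fun p => hpay p.swap) lam₂ lam₁ n₂ n₁

end BetValue

theorem betValue_deriv_intensity_general
    (T t lam₂ : ℝ)
    (pay : ℕ × ℕ → ℝ) (hpay : ∃ C : ℝ, ∀ p : ℕ × ℕ, |pay p| ≤ C) :
    ∀ lam₁ : ℝ, 0 < lam₁ → ∀ n₁ n₂ : ℕ,
      HasDerivAt (fun l : ℝ => betValue l lam₂ T pay t n₁ n₂)
        ((T - t) * (betValue lam₁ lam₂ T pay t (n₁ + 1) n₂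
          - betValue lam₁ lam₂ T pay t n₁ n₂)) lam₁ ∧
      HasDerivAt (fun l : ℝ => betValue lam₁ l T pay t n₁ n₂)
        ((T - t) * (betValue lam₁ lam₂ T pay t n₁ (n₂ + 1)
          - betValue lam₁ lam₂ T pay t n₁ n₂)) lam₂ := by
  obtain ⟨C, hC⟩ := hpay
  intro lam₁ _ n₁ n₂
  exact ⟨hasDerivAt_betValue_fst hC lam₁ lam₂ n₁ n₂, hasDerivAt_betValue_snd hC lam₁ lam₂ n₁ n₂⟩

/-- Sensitivity of a European bet value to the intensities:
`∂X/∂λᵢ = (T−t) · δᵢX`, where `δᵢ` is the forward difference in the `i`-th score. -/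
theorem betValue_deriv_intensity
    (T t lam₂ : ℝ) (hT : 0 < T) (ht : t ∈ Set.Icc (0 : ℝ) T) (hlam₂ : 0 < lam₂)
    (pay : ℕ × ℕ → ℝ) (hpay : ∃ C : ℝ, ∀ p : ℕ × ℕ, |pay p| ≤ C) :
    ∀ lam₁ : ℝ, 0 < lam₁ → ∀ n₁ n₂ : ℕ,
      HasDerivAt (fun l : ℝ => betValue l lam₂ T pay t n₁ n₂)
        ((T - t) * (betValue lam₁ lam₂ T pay t (n₁ + 1) n₂
          - betValue lam₁ lam₂ T pay t n₁ n₂)) lam₁ ∧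
      HasDerivAt (fun l : ℝ => betValue lam₁ l T pay t n₁ n₂)
        ((T - t) * (betValue lam₁ lam₂ T pay t n₁ (n₂ + 1)
          - betValue lam₁ lam₂ T pay t n₁ n₂)) lam₂ :=
  betValue_deriv_intensity_general T t lam₂ pay hpay
end
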